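/- Let P and Q be probability distributions on a finite alphabet 𝒳 with |𝒳| ≥ 2, and suppose KL(P ‖ Q) ≤ δ with √(δ/2) ≤ 1 − 1/|𝒳|. Then |H(P) − H(Q)| ≤ √(δ/2) · log(|𝒳| − 1) + h₂(√(δ/2)), where h₂(ε) := −ε log ε − (1−ε) log(1−ε) is the binary entropy function. -/

import Mathlib

noncomputable section

open Finset

/-- `p` is a probability mass function on the finite type `X`. -/
def IsPMF {X : Type} [Fintype X] (p : X → ℝ) : Prop :=
  (∀ x, 0 ≤ p x) ∧ ∑ x, p x = 1

/-- Shannon entropy (natural logarithm); `Real.log 0 = 0` gives `0 log 0 = 0`. -/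
def ent {X : Type} [Fintype X] (p : X → ℝ) : ℝ :=
  -∑ x, p x * Real.log (p x)

/-- Kullback–Leibler divergence on a finite alphabet. -/
def KLdiv {X : Type} [Fintype X] (p q : X → ℝ) : ℝ :=
  ∑ x, p x * Real.log (p x / q x)

/-- Marginal on the first coordinate of a joint distribution. -/
def margFst {X Y : Type} [Fintype X] [Fintype Y] (p : X × Y → ℝ) : X → ℝ :=
  fun x => ∑ y, p (x, y)

/-- Conditional entropy `H(Y | X)` of a joint distribution on `X × Y`,
given by the identity `H(Y|X) = H(X,Y) - H(X)`. -/
def condEnt {X Y : Type} [Fintype X] [Fintype Y] (p : X × Y → ℝ) : ℝ :=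
  ent p - ent (margFst p)

/-- Conditional mutual information `I(Y ; Z ∣ X)` of a joint distribution on
`X × Y × Z`, in log-ratio form. -/
def cmi {X Y Z : Type} [Fintype X] [Fintype Y] [Fintype Z] (p : X × Y × Z → ℝ) : ℝ :=
  ∑ x, ∑ y, ∑ z, p (x, y, z) *
    Real.log ((p (x, y, z) * (∑ y', ∑ z', p (x, y', z'))) /
      ((∑ z', p (x, y, z')) * (∑ y', p (x, y', z))))

/-- The length-`k` prefix of a sequence of `K` reasoning tokens. -/
def pfx {C : Type} {K : ℕ} (k : ℕ) (h : k ≤ K) (c : Fin K → C) : Fin k → C :=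
  fun t => c (Fin.castLE h t)

/-- The joint distribution of `(Q, C_{1:k}, A)` obtained by marginalizing the
joint distribution of `(Q, C_{1:K}, A)` over the suffix `C_{k+1:K}`. -/
def prefJoint {Q C A : Type} [Fintype Q] [Fintype C] [Fintype A] [DecidableEq C]
    {K : ℕ} (p : Q × (Fin K → C) × A → ℝ) (k : ℕ) (h : k ≤ K) :
    (Q × (Fin k → C)) × A → ℝ :=
  fun z => ∑ c : Fin K → C, if pfx k h c = z.1.2 then p (z.1.1, c, z.2) else 0

/-- `H(A ∣ Q, C_{1:k})`, the conditional answer entropy at prefix length `k`.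
For `k = 0` this is `H(A ∣ Q)`. -/
def condAnsEnt {Q C A : Type} [Fintype Q] [Fintype C] [Fintype A] [DecidableEq C]
    {K : ℕ} (p : Q × (Fin K → C) × A → ℝ) (k : ℕ) (h : k ≤ K) : ℝ :=
  condEnt (prefJoint p k h)

/-- The joint distribution of `((Q, C_{1:t}), C_{t+1}, A)`, separating token `t+1`
from the earlier prefix. -/
def stepJoint {Q C A : Type} [Fintype Q] [Fintype C] [Fintype A] [DecidableEq C]
    {K : ℕ} (p : Q × (Fin K → C) × A → ℝ) (t : ℕ) (h : t + 1 ≤ K) :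
    (Q × (Fin t → C)) × C × A → ℝ :=
  fun z => prefJoint p (t + 1) h ((z.1.1, Fin.snoc z.1.2 z.2.1), z.2.2)

/-- The joint distribution of `(Q, C_{1:k}, A)` reshaped as a triple, so that
`cmi` computes `I(A ; C_{1:k} ∣ Q)`. -/
def prefTriple {Q C A : Type} [Fintype Q] [Fintype C] [Fintype A] [DecidableEq C]
    {K : ℕ} (p : Q × (Fin K → C) × A → ℝ) (k : ℕ) (h : k ≤ K) :
    Q × (Fin k → C) × A → ℝ :=
  fun z => prefJoint p k h ((z.1, z.2.1), z.2.2)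

/-- Model conditional probability `p(a ∣ q, c_{1:k})`. -/
def condProbA {Q C A : Type} [Fintype Q] [Fintype C] [Fintype A] [DecidableEq C]
    {K : ℕ} (p : Q × (Fin K → C) × A → ℝ) (k : ℕ) (h : k ≤ K)
    (q : Q) (cp : Fin k → C) (a : A) : ℝ :=
  prefJoint p k h ((q, cp), a) / margFst (prefJoint p k h) (q, cp)

/-- Binary entropy function. -/
def h2 (e : ℝ) : ℝ := -e * Real.log e - (1 - e) * Real.log (1 - e)

/-- Total variation distance on a finite alphabet. -/
def tv {X : Type} [Fintype X] (p q : X → ℝ) : ℝ :=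
  (1 / 2) * ∑ x, |p x - q x|

lemma finlt {k K : ℕ} (hkK : k ≤ K) (t : Fin k) : t.1 + 1 ≤ K :=
  Nat.succ_le_of_lt (lt_of_lt_of_le t.2 hkK)

/-!
Pinsker's inequality comes from the pointwise bound
`p log (p / q) ≥ (p - q) + 3 (p - q)² / (2 (p + 2q))`, a convexity fact about `x log x`,
summed and combined with Cauchy–Schwarz. For the continuity bound write `m = min P Q`, of mass
`1 - t` with `t = tv P Q`. Subadditivity of `-x log x` splits `H(P)` into the contributions of
`m` and of the excess `P - m`, which has mass `t` on at most `|𝒳| - 1` points; Gibbs'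
inequality bounds `H(Q)` below by the contribution of `m`. The resulting bound
`t log (|𝒳| - 1) + h₂(t)` is the `|𝒳|`-ary entropy of `t`, which increases on
`[0, 1 - 1/|𝒳|]`.
-/

open Real

def pinskerGap (x : ℝ) : ℝ := x * log x - x + 1 - 3 * (x - 1) ^ 2 / (2 * (x + 2))

def pinskerGapDeriv (x : ℝ) : ℝ := log x - 3 * ((x - 1) * (x + 5)) / (2 * (x + 2) ^ 2)

lemma hasDerivAt_pinskerGap {x : ℝ} (hx : 0 < x) :
    HasDerivAt pinskerGap (pinskerGapDeriv x) x := by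
  have hquot : HasDerivAt (fun y => 3 * (y - 1) ^ 2 / (2 * (y + 2)))
      ((3 * (2 * (x - 1)) * (2 * (x + 2)) - 3 * (x - 1) ^ 2 * 2) / (2 * (x + 2)) ^ 2) x := by
    refine HasDerivAt.div ?_ ?_ (by positivity)
    · simpa using (((hasDerivAt_id x).sub_const 1).pow 2).const_mul 3
    · simpa using ((hasDerivAt_id x).add_const 2).const_mul 2
  refine ((((hasDerivAt_mul_log hx.ne').sub (hasDerivAt_id x)).add_const 1).sub hquot).congr_deriv
    ?_
  have : x + 2 ≠ 0 := by positivity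
  unfold pinskerGapDeriv
  field_simp
  ring

lemma hasDerivAt_pinskerGapDeriv {x : ℝ} (hx : 0 < x) :
    HasDerivAt pinskerGapDeriv (x⁻¹ - 27 / (x + 2) ^ 3) x := by
  have hquot : HasDerivAt (fun y => 3 * ((y - 1) * (y + 5)) / (2 * (y + 2) ^ 2))
      ((3 * ((x + 5) + (x - 1)) * (2 * (x + 2) ^ 2) - 3 * ((x - 1) * (x + 5)) * (2 * (2 * (x + 2))))
        / (2 * (x + 2) ^ 2) ^ 2) x := by
    refine HasDerivAt.div ?_ ?_ (by positivity)
    · simpa using (((hasDerivAt_id x).sub_const 1).mul ((hasDerivAt_id x).add_const 5)).const_mul 3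
    · simpa using (((hasDerivAt_id x).add_const 2).pow 2).const_mul 2
  refine ((hasDerivAt_log hx.ne').sub hquot).congr_deriv ?_
  have : x + 2 ≠ 0 := by positivity
  field_simp
  ring

lemma convexOn_pinskerGap : ConvexOn ℝ (Set.Ioi 0) pinskerGap := by
  refine convexOn_of_hasDerivWithinAt2_nonneg (convex_Ioi 0) (f' := pinskerGapDeriv)
    (f'' := fun y => y⁻¹ - 27 / (y + 2) ^ 3)
    (fun y hy => (hasDerivAt_pinskerGap hy).continuousAt.continuousWithinAt)
    (fun y hy => ?_) (fun y hy => ?_) (fun y hy => ?_) <;>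
    simp only [interior_Ioi, Set.mem_Ioi] at hy
  · exact (hasDerivAt_pinskerGap hy).hasDerivWithinAt
  · exact (hasDerivAt_pinskerGapDeriv hy).hasDerivWithinAt
  · -- AM–GM for `y, 1, 1`
    have hcube : 27 * y ≤ (y + 2) ^ 3 := by nlinarith [sq_nonneg (y - 1)]
    rw [sub_nonneg, div_le_iff₀ (by positivity), inv_mul_eq_div, le_div_iff₀ hy]
    linarith

lemma pinskerGap_nonneg {x : ℝ} (hx : 0 < x) : 0 ≤ pinskerGap x := by
  have hmin : IsMinOn pinskerGap (Set.Ioi 0) 1 := by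
    refine convexOn_pinskerGap.isMinOn_of_rightDeriv_eq_zero (by simp) ?_
    rw [(hasDerivAt_pinskerGap one_pos).hasDerivWithinAt.derivWithin (uniqueDiffWithinAt_Ioi 1)]
    norm_num [pinskerGapDeriv]
  simpa [pinskerGap] using hmin (Set.mem_Ioi.2 hx)

lemma sub_add_sq_div_le_mul_log_div {p q : ℝ} (hp : 0 ≤ p) (hq : 0 ≤ q)
    (hpq : 0 < p → 0 < q) :
    p - q + 3 / 2 * ((p - q) ^ 2 / (p + 2 * q)) ≤ p * log (p / q) := by
  rcases hp.eq_or_lt with rfl | hp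
  · rcases hq.eq_or_lt with rfl | hq
    · simp
    · have : (0 - q) ^ 2 / (0 + 2 * q) = q / 2 := by field_simp; ring
      rw [this]
      linarith
  have hq := hpq hp
  have hgap := mul_nonneg hq.le (pinskerGap_nonneg (div_pos hp hq))
  have : q * pinskerGap (p / q) =
      p * log (p / q) - p + q - 3 / 2 * ((p - q) ^ 2 / (p + 2 * q)) := by
    unfold pinskerGap
    field_simp
  linarith

lemma h2_eq_binEntropy : h2 = binEntropy := by
  ext e
  simp only [h2, binEntropy, log_inv]
  ring

lemma negMulLog_add_le {a b : ℝ} (ha : 0 ≤ a) (hb : 0 ≤ b) :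
    negMulLog (a + b) ≤ negMulLog a + negMulLog b := by
  rcases ha.eq_or_lt with rfl | ha
  · simp
  rcases hb.eq_or_lt with rfl | hb
  · simp
  have hla : log a ≤ log (a + b) := log_le_log ha (by linarith)
  have hlb : log b ≤ log (a + b) := log_le_log hb (by linarith)
  simp only [negMulLog, neg_mul]
  nlinarith

lemma sum_negMulLog_le {ι : Type*} (s : Finset ι) {f : ι → ℝ} (hf : ∀ i ∈ s, 0 ≤ f i) :
    ∑ i ∈ s, negMulLog (f i) ≤
      (∑ i ∈ s, f i) * log s.card + negMulLog (∑ i ∈ s, f i) := by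
  rcases s.eq_empty_or_nonempty with rfl | hs
  · simp
  have hn : (0 : ℝ) < s.card := by exact_mod_cast hs.card_pos
  have hjensen := concaveOn_negMulLog.le_map_sum (t := s) (w := fun _ => (s.card : ℝ)⁻¹)
    (p := f) (fun _ _ => by positivity) (by simp [hn.ne']) hf
  simp only [smul_eq_mul, ← Finset.mul_sum] at hjensen
  rw [negMulLog_mul, negMulLog, log_inv] at hjensen
  have := mul_le_mul_of_nonneg_left hjensen hn.le
  field_simp at this
  linarith

section

variable {X : Type} [Fintype X]

lemma tv_comm (p q : X → ℝ) : tv p q = tv q p := by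
  simp only [tv, abs_sub_comm]

lemma tv_nonneg (p q : X → ℝ) : 0 ≤ tv p q := by
  unfold tv
  positivity

lemma tv_sq_le_kl_div_two {P Q : X → ℝ} (hP : IsPMF P) (hQ : IsPMF Q)
    (hac : ∀ x, 0 < P x → 0 < Q x) : tv P Q ^ 2 ≤ KLdiv P Q / 2 := by
  obtain ⟨hP0, hP1⟩ := hP
  obtain ⟨hQ0, hQ1⟩ := hQ
  set w : X → ℝ := fun x => P x + 2 * Q x
  set B := ∑ x, (P x - Q x) ^ 2 / w x
  have hKL : 3 / 2 * B ≤ KLdiv P Q := by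
    have := Finset.sum_le_sum fun x (_ : x ∈ Finset.univ) =>
      sub_add_sq_div_le_mul_log_div (hP0 x) (hQ0 x) (hac x)
    rwa [Finset.sum_add_distrib, Finset.sum_sub_distrib, hP1, hQ1, ← Finset.mul_sum, sub_self,
      zero_add] at this
  have hw : ∑ x, w x = 3 := by
    simp only [w, Finset.sum_add_distrib, ← Finset.mul_sum, hP1, hQ1]
    norm_num
  have hCS : (∑ x, |P x - Q x|) ^ 2 ≤ (∑ x, w x) * B := by
    refine Finset.sum_sq_le_sum_mul_sum_of_sq_le_mul _ (fun x _ => by positivity [hP0 x, hQ0 x])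
      (fun x _ => by positivity [hP0 x, hQ0 x]) fun x _ => ?_
    rcases (show 0 ≤ w x by positivity [hP0 x, hQ0 x]).eq_or_lt with h | h
    · have : P x = Q x := by linarith [hP0 x, hQ0 x]
      simp [this]
    · rw [sq_abs, mul_div_cancel₀ _ h.ne']
  rw [hw] at hCS
  simp only [tv]
  nlinarith

lemma tv_le_sqrt_kl_div_two {P Q : X → ℝ} (hP : IsPMF P) (hQ : IsPMF Q)
    (hac : ∀ x, 0 < P x → 0 < Q x) : tv P Q ≤ √(KLdiv P Q / 2) :=
  Real.le_sqrt_of_sq_le (tv_sq_le_kl_div_two hP hQ hac)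

lemma ent_eq_sum_negMulLog (p : X → ℝ) :
    ent p = ∑ x, negMulLog (p x) := by
  simp [ent, negMulLog, Finset.sum_neg_distrib]

lemma sum_negMulLog_sub_negMulLog_sum_le_ent {m Q : X → ℝ} (hQ : IsPMF Q)
    (hm : ∀ x, 0 ≤ m x) (hmQ : ∀ x, m x ≤ Q x) :
    ∑ x, negMulLog (m x) - negMulLog (∑ x, m x) ≤ ent Q := by
  obtain ⟨hQ0, hQ1⟩ := hQ
  set s := ∑ x, m x
  have hms : ∀ x, m x ≤ s := fun x =>
    Finset.single_le_sum (fun y _ => hm y) (Finset.mem_univ x)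
  have hQle : ∀ x, Q x ≤ 1 := fun x =>
    hQ1 ▸ Finset.single_le_sum (fun y _ => hQ0 y) (Finset.mem_univ x)
  -- Gibbs: `log (s q / m) ≤ s q / m - 1`; and `-q log q ≥ -m log q` as `log q ≤ 0`.
  have hpt : ∀ x, negMulLog (m x) + m x * log s ≤ negMulLog (Q x) + (s * Q x - m x) := by
    intro x
    rcases (hm x).eq_or_lt with h | h
    · rw [← h]
      simp only [negMulLog_zero, zero_mul, add_zero, sub_zero]
      exact add_nonneg (negMulLog_nonneg (hQ0 x) (hQle x))
        (mul_nonneg ((hm x).trans (hms x)) (hQ0 x))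
    have hq : 0 < Q x := h.trans_le (hmQ x)
    have hs : 0 < s := h.trans_le (hms x)
    have hgibbs := log_le_sub_one_of_pos (show 0 < s * Q x / m x by positivity)
    rw [log_div (by positivity) h.ne', log_mul hs.ne' hq.ne'] at hgibbs
    have hcross : m x * log (Q x) ≥ Q x * log (Q x) :=
      mul_le_mul_of_nonpos_right (hmQ x) (log_nonpos (hQ0 x) (hQle x))
    have := mul_le_mul_of_nonneg_left hgibbs h.le
    rw [show m x * (s * Q x / m x - 1) = s * Q x - m x by field_simp] at this
    simp only [negMulLog, neg_mul]
    nlinarith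
  have hsum := Finset.sum_le_sum fun x (_ : x ∈ Finset.univ) => hpt x
  rw [Finset.sum_add_distrib, Finset.sum_add_distrib, Finset.sum_sub_distrib, ← Finset.sum_mul,
    ← Finset.mul_sum, hQ1] at hsum
  rw [ent_eq_sum_negMulLog, negMulLog]
  linarith

lemma sum_min_eq_one_sub_tv {P Q : X → ℝ} (hP : IsPMF P) (hQ : IsPMF Q) :
    ∑ x, min (P x) (Q x) = 1 - tv P Q := by
  have hmin : ∀ x, min (P x) (Q x) = (P x + Q x - |P x - Q x|) / 2 := fun x => by
    linarith [min_add_max (P x) (Q x), max_sub_min_eq_abs' (P x) (Q x)]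
  simp only [hmin, ← Finset.sum_div, Finset.sum_sub_distrib, Finset.sum_add_distrib, hP.2, hQ.2,
    tv]
  ring

lemma ent_sub_ent_le_tv {P Q : X → ℝ} (hP : IsPMF P) (hQ : IsPMF Q) :
    ent P - ent Q ≤ tv P Q * log (Fintype.card X - 1) + h2 (tv P Q) := by
  classical
  have : Nonempty X := Finset.univ_nonempty_iff.1 <|
    Finset.nonempty_of_sum_ne_zero (f := P) (by rw [hP.2]; exact one_ne_zero)
  set t := tv P Q
  set m : X → ℝ := fun x => min (P x) (Q x)
  have hm0 : ∀ x, 0 ≤ m x := fun x => le_min (hP.1 x) (hQ.1 x)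
  have hexcess0 : ∀ x, 0 ≤ P x - m x := fun x => sub_nonneg.2 (min_le_left _ _)
  have hm : ∑ x, m x = 1 - t := sum_min_eq_one_sub_tv hP hQ
  have hexcess : ∑ x, (P x - m x) = t := by rw [Finset.sum_sub_distrib, hP.2, hm]; ring
  -- The excess `P - m` vanishes at some point, so it lives on `card X - 1` points.
  obtain ⟨x₀, -, hx₀⟩ : ∃ x₀ ∈ Finset.univ, P x₀ ≤ Q x₀ :=
    Finset.exists_le_of_sum_le Finset.univ_nonempty (by rw [hP.2, hQ.2])
  have hupper : ent P ≤ ∑ x, negMulLog (m x) + ∑ x, negMulLog (P x - m x) := by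
    rw [ent_eq_sum_negMulLog, ← Finset.sum_add_distrib]
    refine Finset.sum_le_sum fun x _ => ?_
    simpa using negMulLog_add_le (hm0 x) (hexcess0 x)
  have hexcess_ent :
      ∑ x, negMulLog (P x - m x) ≤ t * log (Fintype.card X - 1) + negMulLog t := by
    have hx₀m : P x₀ - m x₀ = 0 := by simp [m, hx₀]
    have := sum_negMulLog_le (Finset.univ.erase x₀) fun x _ => hexcess0 x
    rwa [Finset.sum_erase _ (by simp [hx₀m]), Finset.sum_erase _ (by simp [hx₀m]),
      hexcess, Finset.card_erase_of_mem (Finset.mem_univ x₀), Finset.card_univ,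
      Nat.cast_pred Fintype.card_pos] at this
  have hlower := sum_negMulLog_sub_negMulLog_sum_le_ent hQ hm0 fun x => min_le_right _ _
  rw [hm] at hlower
  rw [h2_eq_binEntropy, binEntropy_eq_negMulLog_add_negMulLog_one_sub]
  linarith

lemma abs_ent_sub_ent_le_tv {P Q : X → ℝ} (hP : IsPMF P) (hQ : IsPMF Q) :
    |ent P - ent Q| ≤ tv P Q * log (Fintype.card X - 1) + h2 (tv P Q) :=
  abs_sub_le_iff.2 ⟨ent_sub_ent_le_tv hP hQ, tv_comm Q P ▸ ent_sub_ent_le_tv hQ hP⟩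

end

lemma mul_log_add_h2_eq_qaryEntropy (q : ℕ) (e : ℝ) :
    e * log (q - 1) + h2 e = qaryEntropy q e := by
  simp [qaryEntropy, h2_eq_binEntropy]

theorem entropy_diff_le_of_kl_le_general
    {X : Type} [Fintype X] (P Q : X → ℝ) (hP : IsPMF P) (hQ : IsPMF Q)
    (hac : ∀ x, 0 < P x → 0 < Q x) (hX : 2 ≤ Fintype.card X)
    (δ : ℝ) (hKL : KLdiv P Q ≤ δ)
    (hvalid : Real.sqrt (δ / 2) ≤ 1 - 1 / (Fintype.card X : ℝ)) :
    |ent P - ent Q|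
      ≤ Real.sqrt (δ / 2) * Real.log ((Fintype.card X : ℝ) - 1)
        + h2 (Real.sqrt (δ / 2)) := by
  have htv : tv P Q ≤ √(δ / 2) :=
    (tv_le_sqrt_kl_div_two hP hQ hac).trans (sqrt_le_sqrt (by linarith))
  have hmono := (qaryEntropy_strictMonoOn hX).monotoneOn
    ⟨tv_nonneg P Q, htv.trans hvalid⟩ ⟨sqrt_nonneg _, hvalid⟩ htv
  rw [← mul_log_add_h2_eq_qaryEntropy, ← mul_log_add_h2_eq_qaryEntropy] at hmono
  exact (abs_ent_sub_ent_le_tv hP hQ).trans hmono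

/-- **Pinsker + Fannes–Audenaert.** If `KL(P ‖ Q) ≤ δ` with
`√(δ/2) ≤ 1 - 1/|𝒳|`, then
`|H(P) - H(Q)| ≤ √(δ/2)·log(|𝒳| - 1) + h₂(√(δ/2))`. -/
theorem entropy_diff_le_of_kl_le
    {X : Type} [Fintype X] (P Q : X → ℝ) (hP : IsPMF P) (hQ : IsPMF Q)
    (hac : ∀ x, 0 < P x → 0 < Q x) (hX : 2 ≤ Fintype.card X)
    (δ : ℝ) (hδ0 : 0 ≤ δ) (hKL : KLdiv P Q ≤ δ)
    (hvalid : Real.sqrt (δ / 2) ≤ 1 - 1 / (Fintype.card X : ℝ)) :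
    |ent P - ent Q|
      ≤ Real.sqrt (δ / 2) * Real.log ((Fintype.card X : ℝ) - 1)
        + h2 (Real.sqrt (δ / 2)) :=
  entropy_diff_le_of_kl_le_general P Q hP hQ hac hX δ hKL hvalid
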